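/- (Olkin–Shepp matrix variance bound for the Gaussian.) Let X ~ N(μ, σ²) and let f, g : ℝ → ℝ be locally absolutely continuous with E[f(X)²] < ∞, E[g(X)²] < ∞, E[f'(X)²] < ∞ and E[g'(X)²] < ∞. Then the 2×2 matrix σ² · [[E[f'(X)²], E[f'(X)g'(X)]], [E[f'(X)g'(X)], E[g'(X)²]]] − [[Var[f(X)], Cov[f(X), g(X)]], [Cov[f(X), g(X)], Var[g(X)]]] is positive semidefinite. -/

import Mathlib

/-!
Testing the matrix against `(a, b)` turns the claim into the Gaussian Poincaré inequality
`Var h(X) ≤ σ² E h'(X)²` for `h = a f + b g`. For that, write `2 Var h(X) = E (h(Y) - h(X))²`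
with `Y` an independent copy of `X`; the fundamental theorem of calculus and Cauchy–Schwarz give
`(h(y) - h(x))² ≤ |y - x| ∫_{Ι x y} h'²`, and Fubini turns the expectation of the right-hand side
into `∫ h'(t)² W(t) dt` with `W(t) = E[|X - Y|; t ∈ Ι X Y]`. Splitting `|X - Y|` at `t`,
`W(t) = 2 (E(t - X)⁺ P(X ≥ t) + E(X - t)⁺ P(X < t))`, and the Gaussian integration by parts
`E(X - t)⁺ = σ² φ(t) + (m - t) P(X ≥ t)`, where `φ` is the density, yields `W = 2σ² φ`.
-/

open MeasureTheory ProbabilityTheory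

/-- `f` is locally absolutely continuous with a.e. derivative `f'`,
expressed through the fundamental theorem of calculus. -/
def HasAEDeriv (f f' : ℝ → ℝ) : Prop :=
  ∀ x y : ℝ, IntervalIntegrable f' MeasureTheory.volume x y ∧
    f y - f x = ∫ t in x..y, f' t

open Real Set Filter Topology
open scoped NNReal ENNReal Interval

lemma ENNReal.lintegral_sq_le_measure_univ_mul {α : Type*} [MeasurableSpace α] {μ : Measure α}
    {g : α → ℝ≥0∞} (hg : AEMeasurable g μ) :
    (∫⁻ a, g a ∂μ) ^ 2 ≤ μ univ * ∫⁻ a, g a ^ 2 ∂μ := by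
  have h := ENNReal.lintegral_mul_norm_pow_le aemeasurable_const (hg.pow_const 2)
    (by norm_num : (0 : ℝ) ≤ 1 / 2) (by norm_num : (0 : ℝ) ≤ 1 / 2) (by norm_num)
    (f := fun _ => (1 : ℝ≥0∞))
  have hsqrt : ∀ a : ℝ≥0∞, (a ^ (1 / 2 : ℝ)) ^ 2 = a := fun a => by
    rw [← ENNReal.rpow_natCast, ← ENNReal.rpow_mul]; norm_num
  have hsqrt' : ∀ a : ℝ≥0∞, (a ^ 2) ^ (1 / 2 : ℝ) = a := fun a => by
    rw [← ENNReal.rpow_natCast, ← ENNReal.rpow_mul]; norm_num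
  simp only [ENNReal.one_rpow, one_mul, lintegral_const, hsqrt'] at h
  calc (∫⁻ a, g a ∂μ) ^ 2 ≤ (μ univ ^ (1 / 2 : ℝ) * (∫⁻ a, g a ^ 2 ∂μ) ^ (1 / 2 : ℝ)) ^ 2 := by
        gcongr
    _ = μ univ * ∫⁻ a, g a ^ 2 ∂μ := by rw [mul_pow, hsqrt, hsqrt]

lemma two_mul_variance_eq_integral_sq_sub_prod {Ω : Type*} [MeasurableSpace Ω] {μ : Measure Ω}
    [IsProbabilityMeasure μ] {X : Ω → ℝ} (hX : MemLp X 2 μ) :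
    2 * Var[X; μ] = ∫ z, (X z.2 - X z.1) ^ 2 ∂μ.prod μ := by
  have hsum := variance_add_prod hX.neg hX
  rw [variance_neg] at hsum
  rw [two_mul, ← hsum, variance_of_integral_eq_zero (X := fun p : Ω × Ω => (-X) p.1 + X p.2)
    (hX.neg.aemeasurable.comp_fst.add hX.aemeasurable.comp_snd)]
  · simp only [Pi.neg_apply, neg_add_eq_sub]
  · rw [integral_add ((hX.neg.integrable one_le_two).comp_fst μ)
      ((hX.integrable one_le_two).comp_snd μ),
      integral_fun_fst, integral_fun_snd]
    simp only [probReal_univ, Pi.neg_apply, integral_neg, smul_eq_mul, mul_neg, one_mul,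
      neg_add_cancel]

lemma integral_const_mul_add_const_mul_sq {Ω : Type*} [MeasurableSpace Ω] {μ : Measure Ω}
    {X Y : Ω → ℝ} (hX : MemLp X 2 μ) (hY : MemLp Y 2 μ) (a b : ℝ) :
    ∫ ω, (a * X ω + b * Y ω) ^ 2 ∂μ
      = a ^ 2 * ∫ ω, X ω ^ 2 ∂μ + 2 * a * b * ∫ ω, X ω * Y ω ∂μ + b ^ 2 * ∫ ω, Y ω ^ 2 ∂μ := by
  have hXY : Integrable (fun ω => X ω * Y ω) μ := hX.integrable_mul hY
  calc ∫ ω, (a * X ω + b * Y ω) ^ 2 ∂μ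
      = ∫ ω, (a ^ 2 * X ω ^ 2 + 2 * a * b * (X ω * Y ω)) + b ^ 2 * Y ω ^ 2 ∂μ := by
        congr 1 with ω; ring
    _ = _ := by
        rw [integral_add (f := fun ω => a ^ 2 * X ω ^ 2 + 2 * a * b * (X ω * Y ω))
          ((hX.integrable_sq.const_mul _).add (hXY.const_mul _)) (hY.integrable_sq.const_mul _),
          integral_add (hX.integrable_sq.const_mul _) (hXY.const_mul _),
          integral_const_mul, integral_const_mul, integral_const_mul]

lemma Matrix.posSemidef_fin_two_of_forall {M : Matrix (Fin 2) (Fin 2) ℝ} (hM : M 1 0 = M 0 1)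
    (h : ∀ a b : ℝ, 0 ≤ a ^ 2 * M 0 0 + 2 * a * b * M 0 1 + b ^ 2 * M 1 1) : M.PosSemidef := by
  refine .of_dotProduct_mulVec_nonneg ?_ fun x => ?_
  · ext i j
    fin_cases i <;> fin_cases j <;> simp [Matrix.conjTranspose_apply, hM]
  · simp only [dotProduct, Matrix.mulVec, Fin.sum_univ_two, hM, Pi.star_apply, star_trivial]
    linear_combination h (x 0) (x 1)

lemma indicator_uIoc_ofReal_abs_sub (x y t : ℝ) :
    (Ι x y).indicator (fun _ => ENNReal.ofReal |x - y|) t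
      = (ENNReal.ofReal (t - x) * (Ici t).indicator 1 y
          + (Iio t).indicator 1 x * ENNReal.ofReal (y - t))
        + (ENNReal.ofReal (t - y) * (Ici t).indicator 1 x
          + (Iio t).indicator 1 y * ENNReal.ofReal (x - t)) := by
  rcases lt_or_ge x t with hx | hx <;> rcases lt_or_ge y t with hy | hy
  · simp [indicator, mem_uIoc, hx, hy, hx.not_ge, hy.not_ge,
      ENNReal.ofReal_of_nonpos (sub_nonpos.2 hx.le), ENNReal.ofReal_of_nonpos (sub_nonpos.2 hy.le)]
  · simp only [indicator, mem_uIoc, hx, hy, and_self, hy.not_gt, hx.not_ge, or_false,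
      ↓reduceIte, mem_Ici, Pi.one_apply, mul_one, mem_Iio, one_mul, mul_zero, zero_mul, add_zero]
    rw [← ENNReal.ofReal_add (by linarith) (by linarith), abs_of_nonpos (by linarith)]
    ring_nf
  · simp only [indicator, mem_uIoc, hx.not_gt, hy.not_ge, and_self, hy, hx, or_true,
      ↓reduceIte, mem_Ici, mul_zero, mem_Iio, zero_mul, add_zero, Pi.one_apply, mul_one, one_mul,
      zero_add]
    rw [← ENNReal.ofReal_add (by linarith) (by linarith), abs_of_nonneg (by linarith)]
    ring_nf
  · simp [indicator, mem_uIoc, hx, hy, hx.not_gt, hy.not_gt,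
      ENNReal.ofReal_of_nonpos (sub_nonpos.2 hx), ENNReal.ofReal_of_nonpos (sub_nonpos.2 hy)]

lemma lintegral_prod_indicator_uIoc_ofReal_abs_sub {μ : Measure ℝ} [SFinite μ] (t : ℝ) :
    ∫⁻ z, (Ι z.1 z.2).indicator (fun _ => ENNReal.ofReal |z.1 - z.2|) t ∂μ.prod μ
      = 2 * ((∫⁻ x, ENNReal.ofReal (t - x) ∂μ) * μ (Ici t)
          + μ (Iio t) * ∫⁻ x, ENNReal.ofReal (x - t) ∂μ) := by
  set F : ℝ × ℝ → ℝ≥0∞ := fun z => ENNReal.ofReal (t - z.1) * (Ici t).indicator 1 z.2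
    + (Iio t).indicator 1 z.1 * ENNReal.ofReal (z.2 - t)
  have hIci : Measurable ((Ici t).indicator (1 : ℝ → ℝ≥0∞)) :=
    measurable_one.indicator measurableSet_Ici
  have hIio : Measurable ((Iio t).indicator (1 : ℝ → ℝ≥0∞)) :=
    measurable_one.indicator measurableSet_Iio
  have hF : ∫⁻ z, F z ∂μ.prod μ = (∫⁻ x, ENNReal.ofReal (t - x) ∂μ) * μ (Ici t)
      + μ (Iio t) * ∫⁻ x, ENNReal.ofReal (x - t) ∂μ := by
    rw [lintegral_add_left (by fun_prop),
      lintegral_prod_mul (f := fun x => ENNReal.ofReal (t - x)) (by fun_prop) (by fun_prop),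
      lintegral_prod_mul (g := fun x => ENNReal.ofReal (x - t)) (by fun_prop) (by fun_prop),
      lintegral_indicator_one measurableSet_Ici, lintegral_indicator_one measurableSet_Iio]
  calc _ = ∫⁻ z, F z + F z.swap ∂μ.prod μ :=
        lintegral_congr fun z => indicator_uIoc_ofReal_abs_sub z.1 z.2 t
    _ = _ := by rw [lintegral_add_left (by fun_prop), lintegral_prod_swap F, hF, two_mul]

namespace HasAEDeriv

variable {f f' g g' : ℝ → ℝ}

lemma continuous (hf : HasAEDeriv f f') : Continuous f := by
  have : f = fun y => f 0 + ∫ t in (0 : ℝ)..y, f' t := funext fun y => by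
    rw [← (hf 0 y).2]; ring
  rw [this]
  exact continuous_const.add (intervalIntegral.continuous_primitive (fun x y => (hf x y).1) 0)

lemma locallyIntegrable_deriv (hf : HasAEDeriv f f') : LocallyIntegrable f' volume := fun x =>
  ⟨Ioo (x - 1) (x + 1), Ioo_mem_nhds (by linarith) (by linarith),
    (hf (x - 1) (x + 1)).1.1.mono_set Ioo_subset_Ioc_self⟩

lemma add (hf : HasAEDeriv f f') (hg : HasAEDeriv g g') :
    HasAEDeriv (fun x => f x + g x) (fun x => f' x + g' x) := fun x y =>
  ⟨(hf x y).1.add (hg x y).1, by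
    rw [intervalIntegral.integral_add (hf x y).1 (hg x y).1, ← (hf x y).2, ← (hg x y).2]; ring⟩

lemma const_mul (hf : HasAEDeriv f f') (c : ℝ) :
    HasAEDeriv (fun x => c * f x) (fun x => c * f' x) := fun x y =>
  ⟨(hf x y).1.const_mul c, by rw [intervalIntegral.integral_const_mul, ← (hf x y).2]; ring⟩

lemma ofReal_sq_sub_le (hf : HasAEDeriv f f') (x y : ℝ) :
    ENNReal.ofReal ((f y - f x) ^ 2)
      ≤ ENNReal.ofReal |y - x| * ∫⁻ t in Ι x y, ENNReal.ofReal (f' t ^ 2) := by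
  obtain ⟨hint, hftc⟩ := hf x y
  have hint' : IntegrableOn f' (Ι x y) := intervalIntegrable_iff.1 hint
  have habs : ENNReal.ofReal |f y - f x| ≤ ∫⁻ t in Ι x y, ‖f' t‖ₑ := by
    rw [hftc, ← Real.norm_eq_abs, intervalIntegral.norm_integral_eq_norm_integral_uIoc,
      ofReal_norm]
    exact enorm_integral_le_lintegral_enorm _
  have hvol : volume (Ι x y) = ENNReal.ofReal |y - x| := by
    rw [Set.uIoc, Real.volume_Ioc, max_sub_min_eq_abs', abs_sub_comm]
  calc ENNReal.ofReal ((f y - f x) ^ 2) = ENNReal.ofReal |f y - f x| ^ 2 := by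
        rw [← ENNReal.ofReal_pow (abs_nonneg _), sq_abs]
    _ ≤ (∫⁻ t in Ι x y, ‖f' t‖ₑ) ^ 2 := by gcongr
    _ ≤ volume.restrict (Ι x y) univ * ∫⁻ t in Ι x y, ‖f' t‖ₑ ^ 2 :=
        ENNReal.lintegral_sq_le_measure_univ_mul hint'.aestronglyMeasurable.enorm
    _ = ENNReal.ofReal |y - x| * ∫⁻ t in Ι x y, ENNReal.ofReal (f' t ^ 2) := by
        rw [Measure.restrict_apply_univ, hvol]
        congr 1
        refine lintegral_congr fun t => ?_
        rw [Real.enorm_eq_ofReal_abs, ← ENNReal.ofReal_pow (abs_nonneg _), sq_abs]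

lemma aestronglyMeasurable_deriv_gaussianReal (hf : HasAEDeriv f f') (m : ℝ) (v : ℝ≥0) :
    AEStronglyMeasurable f' (gaussianReal m v) := by
  rcases eq_or_ne v 0 with rfl | hv
  · rw [gaussianReal_zero_var]
    exact aestronglyMeasurable_dirac
  · exact hf.locallyIntegrable_deriv.aestronglyMeasurable.mono_ac
      (gaussianReal_absolutelyContinuous m hv)

end HasAEDeriv

namespace ProbabilityTheory

variable {m : ℝ} {v : ℝ≥0}

lemma hasDerivAt_gaussianPDFReal (m : ℝ) (v : ℝ≥0) (x : ℝ) :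
    HasDerivAt (gaussianPDFReal m v) (-((x - m) / v) * gaussianPDFReal m v x) x := by
  have hexp : HasDerivAt (fun y => -(y - m) ^ 2 / (2 * v)) (-((x - m) / v)) x := by
    refine (((hasDerivAt_id x).sub_const m).fun_pow 2).neg.div_const _ |>.congr_deriv ?_
    simp only [id, Nat.cast_ofNat]; ring
  rw [gaussianPDFReal_def]
  exact (hexp.exp.const_mul _).congr_deriv (by ring)

lemma tendsto_gaussianPDFReal_atTop (m : ℝ) (v : ℝ≥0) :
    Tendsto (gaussianPDFReal m v) atTop (𝓝 0) := by
  rcases eq_or_ne v 0 with rfl | hv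
  · rw [gaussianPDFReal_zero_var]; exact tendsto_const_nhds
  have hv' : (0 : ℝ) < v := by positivity
  have hsq : Tendsto (fun y : ℝ => -(y - m) ^ 2 / (2 * v)) atTop atBot :=
    (tendsto_neg_atTop_atBot.comp ((tendsto_pow_atTop two_ne_zero).comp
      (tendsto_atTop_add_const_right _ (-m) tendsto_id))).atBot_div_const (by positivity)
  simpa [gaussianPDFReal_def] using (tendsto_exp_atBot.comp hsq).const_mul (√(2 * π * v))⁻¹

lemma integrable_sub_mul_gaussianPDFReal (m : ℝ) (v : ℝ≥0) :
    Integrable (fun x => (x - m) * gaussianPDFReal m v x) := by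
  rcases eq_or_ne v 0 with rfl | hv
  · simp [gaussianPDFReal_zero_var]
  have hb : 0 < (2 * (v : ℝ))⁻¹ := by positivity
  refine (((integrable_mul_exp_neg_mul_sq hb).comp_sub_right m).const_mul
    (√(2 * π * v))⁻¹).congr (ae_of_all _ fun x => ?_)
  simp only [gaussianPDFReal_def]
  ring_nf

lemma integral_Ioi_sub_mul_gaussianPDFReal (hv : v ≠ 0) (t : ℝ) :
    ∫ x in Ioi t, (x - m) * gaussianPDFReal m v x = v * gaussianPDFReal m v t := by
  have hderiv (x : ℝ) : HasDerivAt (fun y => -(v : ℝ) * gaussianPDFReal m v y)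
      ((x - m) * gaussianPDFReal m v x) x := by
    have : (v : ℝ) ≠ 0 := by exact_mod_cast hv
    exact ((hasDerivAt_gaussianPDFReal m v x).const_mul _).congr_deriv (by field_simp)
  rw [integral_Ioi_of_hasDerivAt_of_tendsto' (fun x _ => hderiv x)
    (integrable_sub_mul_gaussianPDFReal m v).integrableOn
    (by simpa using (tendsto_gaussianPDFReal_atTop m v).const_mul (-(v : ℝ)))]
  ring

lemma toReal_lintegral_ofReal_sub_gaussianReal (hv : v ≠ 0) (t : ℝ) :
    (∫⁻ x, ENNReal.ofReal (x - t) ∂gaussianReal m v).toReal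
      = v * gaussianPDFReal m v t + (m - t) * (gaussianReal m v).real (Ici t) := by
  have hdecomp : (fun x => (x - t) * gaussianPDFReal m v x)
      = fun x => (x - m) * gaussianPDFReal m v x + (m - t) * gaussianPDFReal m v x := by
    ext x; ring
  have hint : Integrable (fun x => (x - t) * gaussianPDFReal m v x) := by
    rw [hdecomp]
    exact (integrable_sub_mul_gaussianPDFReal m v).add
      ((integrable_gaussianPDFReal m v).const_mul _)
  have hnonneg : ∀ x ∈ Ici t, 0 ≤ (x - t) * gaussianPDFReal m v x := fun x hx =>
    mul_nonneg (sub_nonneg.2 hx) (gaussianPDFReal_nonneg m v x)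
  have hlint : ∫⁻ x, ENNReal.ofReal (x - t) ∂gaussianReal m v
      = ENNReal.ofReal (∫ x in Ici t, (x - t) * gaussianPDFReal m v x) := calc
    _ = ∫⁻ x, ENNReal.ofReal ((x - t) * gaussianPDFReal m v x) := by
        rw [gaussianReal_of_var_ne_zero m hv, lintegral_withDensity_eq_lintegral_mul _
          (measurable_gaussianPDF m v) (by fun_prop)]
        refine lintegral_congr fun x => ?_
        rw [mul_comm, ENNReal.ofReal_mul' (gaussianPDFReal_nonneg m v x)]
        rfl
    _ = ∫⁻ x in Ici t, ENNReal.ofReal ((x - t) * gaussianPDFReal m v x) := by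
        refine (setLIntegral_eq_of_support_subset fun x hx => ?_).symm
        by_contra hxt
        exact hx (ENNReal.ofReal_eq_zero.2 (mul_nonpos_of_nonpos_of_nonneg
          (by simp at hxt; linarith) (gaussianPDFReal_nonneg m v x)))
    _ = _ := (ofReal_integral_eq_lintegral_ofReal hint.integrableOn
          (ae_restrict_of_forall_mem measurableSet_Ici hnonneg)).symm
  rw [hlint, ENNReal.toReal_ofReal (setIntegral_nonneg measurableSet_Ici hnonneg), hdecomp,
    integral_add (integrable_sub_mul_gaussianPDFReal m v).integrableOn
      ((integrable_gaussianPDFReal m v).const_mul _).integrableOn, integral_const_mul,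
    integral_Ici_eq_integral_Ioi, integral_Ioi_sub_mul_gaussianPDFReal hv,
    measureReal_def, gaussianReal_apply_eq_integral m hv,
    ENNReal.toReal_ofReal (setIntegral_nonneg measurableSet_Ici
      fun x _ => gaussianPDFReal_nonneg m v x)]

lemma lintegral_indicator_uIoc_gaussianReal (hv : v ≠ 0) (t : ℝ) :
    ∫⁻ z, (Ι z.1 z.2).indicator (fun _ => ENNReal.ofReal |z.1 - z.2|) t
        ∂(gaussianReal m v).prod (gaussianReal m v)
      = ENNReal.ofReal (2 * v * gaussianPDFReal m v t) := by
  set μ := gaussianReal m v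
  set C := ∫⁻ x, ENNReal.ofReal (x - t) ∂μ
  set D := ∫⁻ x, ENNReal.ofReal (t - x) ∂μ
  have hint : Integrable (fun x => x - t) μ :=
    (memLp_id_gaussianReal 1).integrable le_rfl |>.sub (integrable_const t)
  have hC : C ≠ ∞ := hint.lintegral_lt_top.ne
  have hD : D ≠ ∞ := by
    simpa [C, D, neg_sub] using hint.neg.lintegral_lt_top.ne
  have hCD : C.toReal - D.toReal = m - t := by
    have := integral_eq_lintegral_pos_part_sub_lintegral_neg_part hint
    simp only [neg_sub] at this
    rw [← this, integral_sub (f := fun x => x) ((memLp_id_gaussianReal 1).integrable le_rfl)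
      (integrable_const t), integral_id_gaussianReal, integral_const, probReal_univ, one_smul]
  have hP : μ.real (Iio t) = 1 - μ.real (Ici t) := by
    rw [← compl_Ici, probReal_compl_eq_one_sub measurableSet_Ici]
  rw [lintegral_prod_indicator_uIoc_ofReal_abs_sub,
    ← ENNReal.toReal_eq_toReal_iff' (by finiteness) ENNReal.ofReal_ne_top,
    ENNReal.toReal_mul, ENNReal.toReal_add (by finiteness) (by finiteness),
    ENNReal.toReal_mul, ENNReal.toReal_mul,
    ENNReal.toReal_ofReal (by have := gaussianPDFReal_nonneg m v t; positivity)]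
  simp only [ENNReal.toReal_ofNat, ← measureReal_def]
  linear_combination 2 * C.toReal * hP - 2 * μ.real (Ici t) * hCD
    + 2 * toReal_lintegral_ofReal_sub_gaussianReal (m := m) hv t

lemma lintegral_ofReal_sq_sub_le_gaussianReal (hv : v ≠ 0) {h h' : ℝ → ℝ}
    (hh : HasAEDeriv h h') :
    ∫⁻ z, ENNReal.ofReal ((h z.2 - h z.1) ^ 2) ∂(gaussianReal m v).prod (gaussianReal m v)
      ≤ ENNReal.ofReal (2 * v) * ∫⁻ x, ENNReal.ofReal (h' x ^ 2) ∂gaussianReal m v := by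
  set μ := gaussianReal m v with hμ
  set g : ℝ → ℝ≥0∞ := fun t => ENNReal.ofReal (h' t ^ 2)
  set K : ℝ × ℝ → ℝ → ℝ≥0∞ := fun z t =>
    (Ι z.1 z.2).indicator (fun _ => ENNReal.ofReal |z.1 - z.2|) t
  have hg : AEMeasurable g :=
    (hh.locallyIntegrable_deriv.aestronglyMeasurable.aemeasurable.pow_const 2).ennreal_ofReal
  have hK : Measurable (Function.uncurry K) := by
    change Measurable ({p : (ℝ × ℝ) × ℝ | p.2 ∈ Ι p.1.1 p.1.2}.indicator
      fun p => ENNReal.ofReal |p.1.1 - p.1.2|)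
    refine Measurable.indicator (by fun_prop) ?_
    simp only [Set.uIoc, mem_Ioc, ofPred_and]
    exact (measurableSet_lt (by fun_prop) (by fun_prop)).inter
      (measurableSet_le (by fun_prop) (by fun_prop))
  calc ∫⁻ z, ENNReal.ofReal ((h z.2 - h z.1) ^ 2) ∂μ.prod μ
      ≤ ∫⁻ z, (ENNReal.ofReal |z.2 - z.1| * ∫⁻ t in Ι z.1 z.2, g t) ∂μ.prod μ :=
        lintegral_mono fun z => hh.ofReal_sq_sub_le z.1 z.2
    _ = ∫⁻ z, (∫⁻ t, K z t * g t) ∂μ.prod μ := by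
        refine lintegral_congr fun z => ?_
        rw [← lintegral_const_mul'' _ hg.restrict, ← lintegral_indicator measurableSet_uIoc]
        refine lintegral_congr fun t => ?_
        by_cases ht : t ∈ Ι z.1 z.2 <;> simp [K, ht, abs_sub_comm]
    _ = ∫⁻ t, ∫⁻ z, K z t * g t ∂μ.prod μ :=
        lintegral_lintegral_swap (hK.aemeasurable.mul hg.comp_snd)
    _ = ∫⁻ t, ENNReal.ofReal (2 * v * gaussianPDFReal m v t) * g t := by
        refine lintegral_congr fun t => ?_
        rw [lintegral_mul_const (f := fun z => K z t) _
          (hK.comp (measurable_id.prodMk measurable_const))]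
        exact congrArg (· * g t) (lintegral_indicator_uIoc_gaussianReal hv t)
    _ = ENNReal.ofReal (2 * v) * ∫⁻ x, g x ∂μ := by
        rw [hμ, gaussianReal_of_var_ne_zero m hv, lintegral_withDensity_eq_lintegral_mul₀
          (measurable_gaussianPDF m v).aemeasurable hg, ← lintegral_const_mul'' _
          ((measurable_gaussianPDF m v).aemeasurable.mul hg)]
        refine lintegral_congr fun t => ?_
        rw [ENNReal.ofReal_mul (by positivity), mul_assoc]
        rfl

theorem variance_le_of_hasAEDeriv_gaussianReal (m : ℝ) (v : ℝ≥0) {h h' : ℝ → ℝ}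
    (hh : HasAEDeriv h h') (hh' : Integrable (fun x => h' x ^ 2) (gaussianReal m v)) :
    Var[h; gaussianReal m v] ≤ v * ∫ x, h' x ^ 2 ∂gaussianReal m v := by
  have hrhs : 0 ≤ v * ∫ x, h' x ^ 2 ∂gaussianReal m v :=
    mul_nonneg v.coe_nonneg (integral_nonneg fun x => sq_nonneg _)
  rcases eq_or_ne v 0 with rfl | hv
  · simp [gaussianReal_zero_var, variance_dirac]
  by_cases hL2 : MemLp h 2 (gaussianReal m v)
  swap
  -- outside `L²`, Mathlib's `Var` is `0`
  · rwa [variance_of_not_memLp hh.continuous.aestronglyMeasurable hL2]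
  have key := ENNReal.toReal_mono (ENNReal.mul_ne_top ENNReal.ofReal_ne_top
    hh'.lintegral_lt_top.ne) (lintegral_ofReal_sq_sub_le_gaussianReal (m := m) hv hh)
  have hcont := hh.continuous
  rw [← integral_eq_lintegral_of_nonneg_ae (ae_of_all _ fun _ => sq_nonneg _) (by fun_prop),
    ← two_mul_variance_eq_integral_sq_sub_prod hL2, ENNReal.toReal_mul,
    ← integral_eq_lintegral_of_nonneg_ae (ae_of_all _ fun _ => sq_nonneg _)
      hh'.aestronglyMeasurable,
    ENNReal.toReal_ofReal (by positivity)] at key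
  linarith

end ProbabilityTheory

open ProbabilityTheory

theorem olkin_shepp_gaussian_general (m σ : ℝ)
    (f f' g g' : ℝ → ℝ)
    (hACf : HasAEDeriv f f') (hACg : HasAEDeriv g g')
    (hf2 : Integrable (fun x => f x ^ 2) (gaussianReal m ((σ ^ 2).toNNReal)))
    (hg2 : Integrable (fun x => g x ^ 2) (gaussianReal m ((σ ^ 2).toNNReal)))
    (hf'2 : Integrable (fun x => f' x ^ 2) (gaussianReal m ((σ ^ 2).toNNReal)))
    (hg'2 : Integrable (fun x => g' x ^ 2) (gaussianReal m ((σ ^ 2).toNNReal))) :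
    (σ ^ 2 •
        (!![∫ x, f' x ^ 2 ∂(gaussianReal m ((σ ^ 2).toNNReal)),
              ∫ x, f' x * g' x ∂(gaussianReal m ((σ ^ 2).toNNReal));
            ∫ x, f' x * g' x ∂(gaussianReal m ((σ ^ 2).toNNReal)),
              ∫ x, g' x ^ 2 ∂(gaussianReal m ((σ ^ 2).toNNReal))] : Matrix (Fin 2) (Fin 2) ℝ) -
      (!![(∫ x, f x ^ 2 ∂(gaussianReal m ((σ ^ 2).toNNReal))) -
              (∫ x, f x ∂(gaussianReal m ((σ ^ 2).toNNReal))) ^ 2,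
            (∫ x, f x * g x ∂(gaussianReal m ((σ ^ 2).toNNReal))) -
              (∫ x, f x ∂(gaussianReal m ((σ ^ 2).toNNReal))) *
                (∫ x, g x ∂(gaussianReal m ((σ ^ 2).toNNReal)));
            (∫ x, f x * g x ∂(gaussianReal m ((σ ^ 2).toNNReal))) -
              (∫ x, f x ∂(gaussianReal m ((σ ^ 2).toNNReal))) *
                (∫ x, g x ∂(gaussianReal m ((σ ^ 2).toNNReal))),
            (∫ x, g x ^ 2 ∂(gaussianReal m ((σ ^ 2).toNNReal))) -
              (∫ x, g x ∂(gaussianReal m ((σ ^ 2).toNNReal))) ^ 2] :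
          Matrix (Fin 2) (Fin 2) ℝ)).PosSemidef := by
  have hσ2 : ((σ ^ 2).toNNReal : ℝ) = σ ^ 2 := Real.coe_toNNReal _ (sq_nonneg σ)
  have hf := (memLp_two_iff_integrable_sq hACf.continuous.aestronglyMeasurable).2 hf2
  have hg := (memLp_two_iff_integrable_sq hACg.continuous.aestronglyMeasurable).2 hg2
  have hf' := (memLp_two_iff_integrable_sq
    (hACf.aestronglyMeasurable_deriv_gaussianReal _ _)).2 hf'2
  have hg' := (memLp_two_iff_integrable_sq
    (hACg.aestronglyMeasurable_deriv_gaussianReal _ _)).2 hg'2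
  refine Matrix.posSemidef_fin_two_of_forall (by simp) fun a b => ?_
  have hpoincare := variance_le_of_hasAEDeriv_gaussianReal m _
    ((hACf.const_mul a).add (hACg.const_mul b))
    ((hf'.const_mul a).add (hg'.const_mul b)).integrable_sq
  rw [variance_eq_sub (X := fun x => a * f x + b * g x)
    ((hf.const_mul a).add (hg.const_mul b))] at hpoincare
  simp only [Pi.pow_apply] at hpoincare
  rw [integral_const_mul_add_const_mul_sq hf hg, integral_const_mul_add_const_mul_sq hf' hg',
    integral_add ((hf.integrable one_le_two).const_mul a) ((hg.integrable one_le_two).const_mul b),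
    integral_const_mul, integral_const_mul, hσ2] at hpoincare
  simp only [Matrix.smul_of, Matrix.smul_cons, smul_eq_mul, Matrix.smul_empty, Matrix.sub_apply,
    Matrix.of_apply, Matrix.cons_val', Matrix.cons_val_zero, Matrix.cons_val_fin_one,
    Matrix.cons_val_one]
  linear_combination hpoincare

/-- The Olkin–Shepp matrix variance bound for the Gaussian: for `X ~ N(m, σ²)`
and `f, g` locally absolutely continuous with square-integrable values and derivatives,
the matrix `σ²·[[E f'², E f'g'],[E f'g', E g'²]] − [[Var f, Cov(f,g)],[Cov(f,g), Var g]]`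
is positive semidefinite. -/
theorem olkin_shepp_gaussian (m σ : ℝ) (hσ : 0 < σ)
    (f f' g g' : ℝ → ℝ)
    (hfmeas : Measurable f) (hf'meas : Measurable f')
    (hgmeas : Measurable g) (hg'meas : Measurable g')
    (hACf : HasAEDeriv f f') (hACg : HasAEDeriv g g')
    (hf2 : Integrable (fun x => f x ^ 2) (gaussianReal m ((σ ^ 2).toNNReal)))
    (hg2 : Integrable (fun x => g x ^ 2) (gaussianReal m ((σ ^ 2).toNNReal)))
    (hf'2 : Integrable (fun x => f' x ^ 2) (gaussianReal m ((σ ^ 2).toNNReal)))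
    (hg'2 : Integrable (fun x => g' x ^ 2) (gaussianReal m ((σ ^ 2).toNNReal))) :
    (σ ^ 2 •
        (!![∫ x, f' x ^ 2 ∂(gaussianReal m ((σ ^ 2).toNNReal)),
              ∫ x, f' x * g' x ∂(gaussianReal m ((σ ^ 2).toNNReal));
            ∫ x, f' x * g' x ∂(gaussianReal m ((σ ^ 2).toNNReal)),
              ∫ x, g' x ^ 2 ∂(gaussianReal m ((σ ^ 2).toNNReal))] : Matrix (Fin 2) (Fin 2) ℝ) -
      (!![(∫ x, f x ^ 2 ∂(gaussianReal m ((σ ^ 2).toNNReal))) -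
              (∫ x, f x ∂(gaussianReal m ((σ ^ 2).toNNReal))) ^ 2,
            (∫ x, f x * g x ∂(gaussianReal m ((σ ^ 2).toNNReal))) -
              (∫ x, f x ∂(gaussianReal m ((σ ^ 2).toNNReal))) *
                (∫ x, g x ∂(gaussianReal m ((σ ^ 2).toNNReal)));
            (∫ x, f x * g x ∂(gaussianReal m ((σ ^ 2).toNNReal))) -
              (∫ x, f x ∂(gaussianReal m ((σ ^ 2).toNNReal))) *
                (∫ x, g x ∂(gaussianReal m ((σ ^ 2).toNNReal))),
            (∫ x, g x ^ 2 ∂(gaussianReal m ((σ ^ 2).toNNReal))) -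
              (∫ x, g x ∂(gaussianReal m ((σ ^ 2).toNNReal))) ^ 2] :
          Matrix (Fin 2) (Fin 2) ℝ)).PosSemidef :=
  olkin_shepp_gaussian_general m σ f f' g g' hACf hACg hf2 hg2 hf'2 hg'2
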